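/- arXiv:2307.00888 — 4 statements merged into one kernel-verified Lean document; each statement's English description precedes it below -/
import Mathlib

section
/- Let (γ_k)_{k≥1} be positive reals with γ_k → ∞. Let h : [0,∞) × ℕ → (0,∞) be bounded. Let (p_ξ)_{ξ∈ℕ} be a probability mass function on ℕ with p_1 = 0. For each k and each (x,y) ∈ [0,∞) × ℕ, let v_k(·; x,y) be a probability mass function on ℕ with v_k(1; x,y) < 1, and assume: (i) sup_{(x,y)} |γ_k (1 − v_k(1; x,y)) − h(x,y)| → 0 as k → ∞; (ii) for every ξ ∈ ℕ with ξ ≠ 1, sup_{(x,y)} | v_k(ξ; x,y)/(1 − v_k(1; x,y)) − p_ξ | → 0 as k → ∞. Define Φ_{k,2}(λ; x,y) = γ_k [ e^{-λ} − Σ_{j=0}^∞ v_k(j; x,y) e^{-λ j} ] and φ₂(λ) = Σ_{ξ=0}^∞ (e^{-λ(ξ−1)} − 1) p_ξ. Then for every Λ > 0, sup { | e^{λ} Φ_{k,2}(λ; x,y) + h(x,y) φ₂(λ) | : (x,y) ∈ [0,∞) × ℕ, λ ∈ [0,Λ] } → 0 as k → ∞. -/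
/-!
Write `f_λ(j) = 1 - e^{-λ(j-1)}`, so that `e^λ Φ_{k,2} = γ_k ∑ v_k(j) f_λ(j)` and
`φ₂(λ) = -∑ p_ξ f_λ(ξ)`. Since `f_λ(1) = 0`, the first sum equals `(1 - v_k(1)) ∑ q_k(j) f_λ(j)`,
where `q_k` is `v_k` conditioned on `{j ≠ 1}`. As `|f_λ| ≤ e^Λ`, the error is at most
`e^Λ (|γ_k (1 - v_k(1)) - h| + h ‖q_k - p‖₁)`. Pointwise convergence of probability vectors
to the probability vector `p` (which charges no mass at `1`) upgrades to `ℓ¹` convergence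
(Scheffé), and all of this is uniform in `(x, y)`.
-/

open Filter Finset

noncomputable section

def oneSubExpShift (l : ℝ) (j : ℕ) : ℝ := 1 - Real.exp (-l * ((j : ℝ) - 1))

@[simp]
lemma oneSubExpShift_one (l : ℝ) : oneSubExpShift l 1 = 0 := by
  simp [oneSubExpShift]

lemma abs_oneSubExpShift_le {l : ℝ} (hl : 0 ≤ l) (j : ℕ) : |oneSubExpShift l j| ≤ Real.exp l := by
  have hexp : Real.exp (-l * ((j : ℝ) - 1)) ≤ Real.exp l :=
    Real.exp_le_exp.2 (by nlinarith [(j.cast_nonneg : (0 : ℝ) ≤ j)])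
  have h1 : 1 ≤ Real.exp l := Real.one_le_exp hl
  rw [oneSubExpShift, abs_le]
  constructor <;> linarith [Real.exp_pos (-l * ((j : ℝ) - 1))]

lemma exp_mul_sub_tsum_eq_tsum_mul_oneSubExpShift {l : ℝ} (hl : 0 ≤ l) {w : ℕ → ℝ}
    (hw : HasSum w 1) :
    Real.exp l * (Real.exp (-l) - ∑' j : ℕ, w j * Real.exp (-l * (j : ℝ)))
      = ∑' j : ℕ, w j * oneSubExpShift l j := by
  have hsum : Summable fun j : ℕ => w j * Real.exp (-l * (j : ℝ)) := by
    refine Summable.of_norm_bounded hw.summable.abs fun j => ?_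
    rw [Real.norm_eq_abs, abs_mul, Real.abs_exp]
    exact mul_le_of_le_one_right (abs_nonneg _)
      (Real.exp_le_one_iff.2 (by nlinarith [(j.cast_nonneg : (0 : ℝ) ≤ j)]))
  have hshift : ∀ j : ℕ, w j * oneSubExpShift l j
      = w j - Real.exp l * (w j * Real.exp (-l * (j : ℝ))) := fun j => by
    rw [oneSubExpShift, mul_left_comm, ← Real.exp_add]
    ring_nf
  rw [tsum_congr hshift, (hw.sub (hsum.hasSum.mul_left _)).tsum_eq, mul_sub, ← Real.exp_add,
    add_neg_cancel, Real.exp_zero]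

/-- The vector `w` conditioned on `{j ≠ i}`. -/
def condNe (w : ℕ → ℝ) (i : ℕ) (j : ℕ) : ℝ := if j = i then 0 else w j / (1 - w i)

@[simp]
lemma condNe_self (w : ℕ → ℝ) (i : ℕ) : condNe w i i = 0 := if_pos rfl

lemma condNe_of_ne (w : ℕ → ℝ) {i j : ℕ} (h : j ≠ i) : condNe w i j = w j / (1 - w i) :=
  if_neg h

lemma condNe_nonneg {w : ℕ → ℝ} (hw : ∀ j, 0 ≤ w j) {i : ℕ} (hi : w i < 1) (j : ℕ) :
    0 ≤ condNe w i j := by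
  unfold condNe
  split_ifs
  exacts [le_rfl, div_nonneg (hw j) (sub_nonneg.2 hi.le)]

lemma hasSum_condNe {w : ℕ → ℝ} (hw : HasSum w 1) {i : ℕ} (hi : w i ≠ 1) :
    HasSum (condNe w i) 1 := by
  have hne : 1 - w i ≠ 0 := sub_ne_zero.2 hi.symm
  have hfun : condNe w i = fun j => (w j - if j = i then w i else 0) / (1 - w i) := by
    ext j
    by_cases hj : j = i
    · simp [hj]
    · simp [condNe_of_ne w hj, hj]
  have h := (hw.sub (hasSum_ite_eq i (w i))).div_const (1 - w i)
  rwa [← hfun, div_self hne] at h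

lemma tsum_mul_eq_mul_tsum_condNe (w : ℕ → ℝ) {i : ℕ} (hi : w i ≠ 1) {f : ℕ → ℝ} (hf : f i = 0) :
    ∑' j, w j * f j = (1 - w i) * ∑' j, condNe w i j * f j := by
  rw [← tsum_mul_left]
  refine tsum_congr fun j => ?_
  by_cases hj : j = i
  · simp [hj, hf]
  · rw [condNe_of_ne w hj]
    field_simp [sub_ne_zero.2 hi.symm]

lemma summable_mul_of_abs_le {a f : ℕ → ℝ} (ha : Summable a) {M : ℝ} (hf : ∀ j, |f j| ≤ M) :
    Summable fun j => a j * f j :=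
  Summable.of_norm_bounded (ha.abs.mul_right M) fun j => by
    rw [Real.norm_eq_abs, abs_mul]
    exact mul_le_mul_of_nonneg_left (hf j) (abs_nonneg _)

lemma abs_tsum_mul_le {a f : ℕ → ℝ} (ha : Summable a) {M : ℝ} (hf : ∀ j, |f j| ≤ M) :
    |∑' j, a j * f j| ≤ M * ∑' j, |a j| := by
  have hbound : ∀ j, |a j * f j| ≤ M * |a j| := fun j => by
    rw [abs_mul, mul_comm M]
    exact mul_le_mul_of_nonneg_left (hf j) (abs_nonneg _)
  have habs : Summable fun j => |a j * f j| := (summable_mul_of_abs_le ha hf).abs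
  calc |∑' j, a j * f j| ≤ ∑' j, |a j * f j| := by
        simpa only [Real.norm_eq_abs] using
          norm_tsum_le_tsum_norm (f := fun j => a j * f j) (by simpa only [Real.norm_eq_abs])
    _ ≤ ∑' j, M * |a j| := Summable.tsum_le_tsum hbound habs (ha.abs.mul_left M)
    _ = M * ∑' j, |a j| := tsum_mul_left

/-- Scheffé: both have mass one, so the mass of `q` beyond `n` is that of `p` plus the
discrepancy below `n`. -/
lemma tsum_abs_sub_le_of_hasSum_one {q p : ℕ → ℝ} (hq0 : ∀ j, 0 ≤ q j) (hp0 : ∀ j, 0 ≤ p j)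
    (hq : HasSum q 1) (hp : HasSum p 1) {n : ℕ} {δ : ℝ} (hδ : ∀ j < n, |q j - p j| ≤ δ) :
    ∑' j, |q j - p j| ≤ 2 * (n * δ + ∑' j, p (j + n)) := by
  have hd : Summable fun j => |q j - p j| := (hq.summable.sub hp.summable).abs
  have hqt := (summable_nat_add_iff n).2 hq.summable
  have hpt := (summable_nat_add_iff n).2 hp.summable
  have hhead : ∑ j ∈ range n, |q j - p j| ≤ n * δ := by
    simpa using Finset.sum_le_sum fun j hj => hδ j (Finset.mem_range.1 hj)
  have htail : ∑' j, |q (j + n) - p (j + n)| ≤ ∑' j, q (j + n) + ∑' j, p (j + n) := by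
    rw [← hqt.tsum_add hpt]
    refine Summable.tsum_le_tsum (fun j => ?_) ((summable_nat_add_iff n).2 hd) (hqt.add hpt)
    rw [abs_le]
    constructor <;> linarith [hq0 (j + n), hp0 (j + n)]
  have hmass : ∑' j, q (j + n) = ∑ j ∈ range n, (p j - q j) + ∑' j, p (j + n) := by
    have hqs := hq.summable.sum_add_tsum_nat_add n
    have hps := hp.summable.sum_add_tsum_nat_add n
    rw [hq.tsum_eq] at hqs
    rw [hp.tsum_eq] at hps
    rw [Finset.sum_sub_distrib]
    linarith
  have hdiff : ∑ j ∈ range n, (p j - q j) ≤ ∑ j ∈ range n, |q j - p j| :=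
    Finset.sum_le_sum fun j _ => by rw [abs_sub_comm]; exact le_abs_self _
  rw [← hd.sum_add_tsum_nat_add n]
  linarith

lemma abs_exp_mul_add_mul_tsum_le {l : ℝ} (hl : 0 ≤ l) {w p : ℕ → ℝ} (hw0 : ∀ j, 0 ≤ w j)
    (hw : HasSum w 1) (hw1 : w 1 < 1) (hp : Summable p) (g H : ℝ) :
    |Real.exp l * (g * (Real.exp (-l) - ∑' j : ℕ, w j * Real.exp (-l * (j : ℝ))))
        + H * ∑' ξ : ℕ, (Real.exp (-l * ((ξ : ℝ) - 1)) - 1) * p ξ|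
      ≤ Real.exp l * (|g * (1 - w 1) - H| + |H| * ∑' j, |condNe w 1 j - p j|) := by
  set q := condNe w 1
  have hq := hasSum_condNe hw hw1.ne
  have hf := abs_oneSubExpShift_le hl
  have hφ : ∑' ξ : ℕ, (Real.exp (-l * ((ξ : ℝ) - 1)) - 1) * p ξ
      = -∑' j, p j * oneSubExpShift l j := by
    rw [← tsum_neg]
    exact tsum_congr fun j => by rw [oneSubExpShift]; ring
  have hS : |∑' j, q j * oneSubExpShift l j| ≤ Real.exp l := by
    simpa [abs_of_nonneg (condNe_nonneg hw0 hw1 _), hq.tsum_eq] using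
      abs_tsum_mul_le hq.summable hf
  have hSB : |∑' j, q j * oneSubExpShift l j - ∑' j, p j * oneSubExpShift l j|
      ≤ Real.exp l * ∑' j, |q j - p j| := by
    rw [← (summable_mul_of_abs_le hq.summable hf).tsum_sub (summable_mul_of_abs_le hp hf)]
    simpa only [sub_mul] using abs_tsum_mul_le (hq.summable.sub hp) hf
  rw [mul_left_comm, exp_mul_sub_tsum_eq_tsum_mul_oneSubExpShift hl hw,
    tsum_mul_eq_mul_tsum_condNe w hw1.ne (oneSubExpShift_one l), hφ]
  set S := ∑' j, q j * oneSubExpShift l j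
  set B := ∑' j, p j * oneSubExpShift l j
  calc |g * ((1 - w 1) * S) + H * -B| = |(g * (1 - w 1) - H) * S + H * (S - B)| := by ring_nf
    _ ≤ |g * (1 - w 1) - H| * |S| + |H| * |S - B| := by
        rw [← abs_mul, ← abs_mul]; exact abs_add_le _ _
    _ ≤ |g * (1 - w 1) - H| * Real.exp l + |H| * (Real.exp l * ∑' j, |q j - p j|) := by
        gcongr
    _ = _ := by ring

lemma eventually_tsum_abs_condNe_sub_lt {p : ℕ → ℝ} (hp0 : ∀ ξ, 0 ≤ p ξ) (hpsum : HasSum p 1)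
    (hp1 : p 1 = 0) {v : ℕ → ℝ → ℕ → ℕ → ℝ} (hv0 : ∀ k, ∀ x ≥ (0:ℝ), ∀ y ξ : ℕ, 0 ≤ v k x y ξ)
    (hvsum : ∀ k, ∀ x ≥ (0:ℝ), ∀ y : ℕ, HasSum (v k x y) 1)
    (hv1 : ∀ k, ∀ x ≥ (0:ℝ), ∀ y : ℕ, v k x y 1 < 1)
    (hcond2 : ∀ ξ : ℕ, ξ ≠ 1 → ∀ ε > (0:ℝ), ∃ K : ℕ, ∀ k ≥ K, ∀ x ≥ (0:ℝ), ∀ y : ℕ,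
      |v k x y ξ / (1 - v k x y 1) - p ξ| < ε) {η : ℝ} (hη : 0 < η) :
    ∀ᶠ k in atTop, ∀ x ≥ (0:ℝ), ∀ y : ℕ, ∑' j, |condNe (v k x y) 1 j - p j| < η := by
  obtain ⟨n, hn⟩ := ((tendsto_sum_nat_add p).eventually_lt_const (by positivity : 0 < η / 4)).exists
  have hδ : 0 < η / (4 * (n + 1)) := by positivity
  have hnδ : n * (η / (4 * (n + 1))) < η / 4 := by
    rw [mul_div_assoc', div_lt_div_iff₀ (by positivity) (by positivity)]; nlinarith
  have hhead : ∀ᶠ k in atTop, ∀ j ∈ range n, ∀ x ≥ (0:ℝ), ∀ y : ℕ,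
      |condNe (v k x y) 1 j - p j| ≤ η / (4 * (n + 1)) := by
    refine (Finset.eventually_all _).2 fun j _ => ?_
    rcases eq_or_ne j 1 with rfl | hj
    · exact Eventually.of_forall fun k x _ y => by simp [hp1, hδ.le]
    · obtain ⟨K, hK⟩ := hcond2 j hj _ hδ
      exact eventually_atTop.2 ⟨K, fun k hk x hx y => by
        rw [condNe_of_ne _ hj]; exact (hK k hk x hx y).le⟩
  filter_upwards [hhead] with k hk x hx y
  have := tsum_abs_sub_le_of_hasSum_one (condNe_nonneg (hv0 k x hx y) (hv1 k x hx y))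
    hp0 (hasSum_condNe (hvsum k x hx y) (hv1 k x hx y).ne) hpsum
    fun j hj => hk j (mem_range.2 hj) x hx y
  linarith

end

theorem stmt2_general
    (γ : ℕ → ℝ)
    (h : ℝ → ℕ → ℝ) (hpos : ∀ x ≥ (0:ℝ), ∀ y : ℕ, 0 < h x y)
    (hbdd : ∃ C : ℝ, ∀ x ≥ (0:ℝ), ∀ y : ℕ, h x y ≤ C)
    (p : ℕ → ℝ) (hp0 : ∀ ξ, 0 ≤ p ξ) (hpsum : HasSum p 1) (hp1 : p 1 = 0)
    (v : ℕ → ℝ → ℕ → ℕ → ℝ)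
    (hv0 : ∀ k, ∀ x ≥ (0:ℝ), ∀ y ξ : ℕ, 0 ≤ v k x y ξ)
    (hvsum : ∀ k, ∀ x ≥ (0:ℝ), ∀ y : ℕ, HasSum (v k x y) 1)
    (hv1 : ∀ k, ∀ x ≥ (0:ℝ), ∀ y : ℕ, v k x y 1 < 1)
    (hcond1 : ∀ ε > (0:ℝ), ∃ K : ℕ, ∀ k ≥ K, ∀ x ≥ (0:ℝ), ∀ y : ℕ,
      |γ k * (1 - v k x y 1) - h x y| < ε)
    (hcond2 : ∀ ξ : ℕ, ξ ≠ 1 → ∀ ε > (0:ℝ), ∃ K : ℕ, ∀ k ≥ K, ∀ x ≥ (0:ℝ), ∀ y : ℕ,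
      |v k x y ξ / (1 - v k x y 1) - p ξ| < ε) :
    ∀ Λ > (0:ℝ), ∀ ε > (0:ℝ), ∃ K : ℕ, ∀ k ≥ K, ∀ x ≥ (0:ℝ), ∀ y : ℕ,
      ∀ l ∈ Set.Icc (0:ℝ) Λ,
      |Real.exp l * (γ k * (Real.exp (-l) - ∑' j : ℕ, v k x y j * Real.exp (-l * (j:ℝ))))
        + h x y * (∑' ξ : ℕ, (Real.exp (-l * ((ξ:ℝ) - 1)) - 1) * p ξ)| < ε := by
  intro Λ _ ε hε
  obtain ⟨C, hC⟩ := hbdd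
  have hC0 : 0 < C := (hpos 0 le_rfl 0).trans_le (hC 0 le_rfl 0)
  set η := ε / (2 * C * Real.exp Λ)
  obtain ⟨K₁, hK₁⟩ := hcond1 (ε / (2 * Real.exp Λ)) (by positivity)
  obtain ⟨K₂, hK₂⟩ := eventually_atTop.1
    (eventually_tsum_abs_condNe_sub_lt hp0 hpsum hp1 hv0 hvsum hv1 hcond2 (by positivity : 0 < η))
  refine ⟨max K₁ K₂, fun k hk x hx y l ⟨hl0, hlΛ⟩ => ?_⟩
  have hH : |h x y| * ∑' j, |condNe (v k x y) 1 j - p j| ≤ C * η :=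
    mul_le_mul (abs_le.2 ⟨by linarith [hpos x hx y], hC x hx y⟩)
      (hK₂ k (le_of_max_le_right hk) x hx y).le (by positivity) hC0.le
  calc _ ≤ Real.exp l * (|γ k * (1 - v k x y 1) - h x y|
          + |h x y| * ∑' j, |condNe (v k x y) 1 j - p j|) :=
        abs_exp_mul_add_mul_tsum_le hl0 (hv0 k x hx y) (hvsum k x hx y) (hv1 k x hx y)
          hpsum.summable _ _
    _ ≤ Real.exp Λ * (|γ k * (1 - v k x y 1) - h x y|
          + |h x y| * ∑' j, |condNe (v k x y) 1 j - p j|) := by gcongr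
    _ < Real.exp Λ * (ε / (2 * Real.exp Λ) + C * η) :=
        mul_lt_mul_of_pos_left (add_lt_add_of_lt_of_le (hK₁ k (le_of_max_le_left hk) x hx y) hH)
          (Real.exp_pos Λ)
    _ = ε := by simp only [η]; field_simp; ring

/-- Proposition 2.6 of the paper: `e^{λ}Φ_{k,2}(λ; x,y)` converges to `−h(x,y)φ₂(λ)`
uniformly in `(x,y) ∈ [0,∞) × ℕ` and `λ` in compact intervals, under
Conditions (2.1.2)–(2.1.3). -/
theorem stmt2
    (γ : ℕ → ℝ) (hγpos : ∀ k, 0 < γ k) (hγ : Tendsto γ atTop atTop)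
    (h : ℝ → ℕ → ℝ) (hpos : ∀ x ≥ (0:ℝ), ∀ y : ℕ, 0 < h x y)
    (hbdd : ∃ C : ℝ, ∀ x ≥ (0:ℝ), ∀ y : ℕ, h x y ≤ C)
    (p : ℕ → ℝ) (hp0 : ∀ ξ, 0 ≤ p ξ) (hpsum : HasSum p 1) (hp1 : p 1 = 0)
    (v : ℕ → ℝ → ℕ → ℕ → ℝ)
    (hv0 : ∀ k, ∀ x ≥ (0:ℝ), ∀ y ξ : ℕ, 0 ≤ v k x y ξ)
    (hvsum : ∀ k, ∀ x ≥ (0:ℝ), ∀ y : ℕ, HasSum (v k x y) 1)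
    (hv1 : ∀ k, ∀ x ≥ (0:ℝ), ∀ y : ℕ, v k x y 1 < 1)
    (hcond1 : ∀ ε > (0:ℝ), ∃ K : ℕ, ∀ k ≥ K, ∀ x ≥ (0:ℝ), ∀ y : ℕ,
      |γ k * (1 - v k x y 1) - h x y| < ε)
    (hcond2 : ∀ ξ : ℕ, ξ ≠ 1 → ∀ ε > (0:ℝ), ∃ K : ℕ, ∀ k ≥ K, ∀ x ≥ (0:ℝ), ∀ y : ℕ,
      |v k x y ξ / (1 - v k x y 1) - p ξ| < ε) :
    ∀ Λ > (0:ℝ), ∀ ε > (0:ℝ), ∃ K : ℕ, ∀ k ≥ K, ∀ x ≥ (0:ℝ), ∀ y : ℕ,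
      ∀ l ∈ Set.Icc (0:ℝ) Λ,
      |Real.exp l * (γ k * (Real.exp (-l) - ∑' j : ℕ, v k x y j * Real.exp (-l * (j:ℝ))))
        + h x y * (∑' ξ : ℕ, (Real.exp (-l * ((ξ:ℝ) - 1)) - 1) * p ξ)| < ε :=
  stmt2_general γ h hpos hbdd p hp0 hpsum hp1 v hv0 hvsum hv1 hcond1 hcond2
end

section
/- Let f : [0,∞) × ℕ → ℝ be bounded and such that for each y ∈ ℕ the map x ↦ f(x,y) is twice continuously differentiable on [0,∞) with sup_{(x,y)} ( |f(x,y)| + |∂_x f(x,y)| + |∂²_{xx} f(x,y)| ) < ∞. Then there exists a doubly indexed family (f^{m,n})_{m,n ∈ ℕ} of functions from [0,∞) × ℕ to ℝ such that: each f^{m,n} is bounded, twice continuously differentiable in x with bounded first and second x-derivatives, and vanishes at infinity (for every ε > 0 there is R > 0 such that |f^{m,n}(x,y)| < ε whenever x + y > R); and for every bounded subset B of [0,∞) × ℕ, sup_{(x,y) ∈ B} ( |f^{m,n}(x,y) − f(x,y)| + |∂_x f^{m,n}(x,y) − ∂_x f(x,y)| + |∂²_{xx} f^{m,n}(x,y)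 − ∂²_{xx} f(x,y)| ) → 0 as m, n → ∞. -/
/-!
Damp `f` by the factor `exp (-x / c)` and truncate it to `y ≤ n`. The damped function vanishes at
infinity, and by the product rule its `x`-derivatives are `exp (-x / c)` times those of `f` plus
terms of size `O(1 / c)`. Since `1 - exp (-x / c) ≤ x / c`, on a bounded set the damped 2-jet
differs from that of `f` by `O(1 / c)`, so `c = m + 1` and the truncation level `n` both going to
infinity give the approximation.
-/

open Real Set Filter Topology

namespace DampedCutoff

noncomputable section

variable {f f₁ f₁₁ g g' g'' : ℝ → ℕ → ℝ} {s : Set ℝ} {c x : ℝ} {n y : ℕ}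

def cutoff (c : ℝ) (n : ℕ) (g : ℝ → ℕ → ℝ) (x : ℝ) (y : ℕ) : ℝ :=
  if y ≤ n then exp (-x / c) * g x y else 0

def dampedDeriv (c : ℝ) (g g' : ℝ → ℕ → ℝ) (x : ℝ) (y : ℕ) : ℝ :=
  g' x y - g x y / c

def dampedDeriv₂ (c : ℝ) (f f₁ f₁₁ : ℝ → ℕ → ℝ) : ℝ → ℕ → ℝ :=
  dampedDeriv c (dampedDeriv c f f₁) (dampedDeriv c f₁ f₁₁)

theorem _root_.HasDerivWithinAt.exp_neg_div_mul {g : ℝ → ℝ} {g' : ℝ}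
    (hg : HasDerivWithinAt g g' s x) :
    HasDerivWithinAt (fun x => exp (-x / c) * g x) (exp (-x / c) * (g' - g x / c)) s x := by
  have he : HasDerivAt (fun x => exp (-x / c)) (exp (-x / c) * (-1 / c)) x := by
    simpa using ((hasDerivAt_id x).neg.div_const c).exp
  exact (he.hasDerivWithinAt.mul hg).congr_deriv (by ring)

theorem hasDerivWithinAt_cutoff (hg : HasDerivWithinAt (g · y) (g' x y) s x) :
    HasDerivWithinAt (cutoff c n g · y) (cutoff c n (dampedDeriv c g g') x y) s x := by
  by_cases hy : y ≤ n
  · simpa only [cutoff, dampedDeriv, if_pos hy] using hg.exp_neg_div_mul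
  · simpa only [cutoff, if_neg hy] using hasDerivWithinAt_const x s (0 : ℝ)

theorem hasDerivWithinAt_dampedDeriv (hg : HasDerivWithinAt (g · y) (g' x y) s x)
    (hg' : HasDerivWithinAt (g' · y) (g'' x y) s x) :
    HasDerivWithinAt (dampedDeriv c g g' · y) (dampedDeriv c g' g'' x y) s x :=
  hg'.sub (hg.div_const c)

theorem continuousOn_cutoff (hg : ContinuousOn (g · y) s) :
    ContinuousOn (cutoff c n g · y) s := by
  by_cases hy : y ≤ n
  · simp only [cutoff, if_pos hy]
    exact (continuous_exp.comp (continuous_neg.div_const c)).continuousOn.mul hg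
  · simpa only [cutoff, if_neg hy] using continuousOn_const

theorem continuousOn_dampedDeriv (hg : ContinuousOn (g · y) s)
    (hg' : ContinuousOn (g' · y) s) : ContinuousOn (dampedDeriv c g g' · y) s :=
  hg'.sub (hg.div_const c)

theorem exp_neg_div_le_one (hc : 0 ≤ c) (hx : 0 ≤ x) : exp (-x / c) ≤ 1 :=
  exp_le_one_iff.2 (by rw [neg_div]; exact neg_nonpos.2 (div_nonneg hx hc))

theorem abs_cutoff_le (hc : 0 ≤ c) (hx : 0 ≤ x) : |cutoff c n g x y| ≤ |g x y| := by
  unfold cutoff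
  split_ifs
  · rw [abs_mul, abs_of_pos (exp_pos _)]
    exact mul_le_of_le_one_left (abs_nonneg _) (exp_neg_div_le_one hc hx)
  · simp

theorem abs_cutoff_sub_le (hc : 0 ≤ c) (hx : 0 ≤ x) (hy : y ≤ n) (h : ℝ → ℕ → ℝ) :
    |cutoff c n g x y - h x y| ≤ x / c * |h x y| + |g x y - h x y| := by
  set e := exp (-x / c)
  have he : 0 < e := exp_pos _
  have he₁ : e ≤ 1 := exp_neg_div_le_one hc hx
  have hgap : 1 - e ≤ x / c := by linarith [add_one_le_exp (-x / c), neg_div c x]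
  calc |cutoff c n g x y - h x y| = |e * (g x y - h x y) - (1 - e) * h x y| := by
        simp only [cutoff, if_pos hy]; congr 1; ring
    _ ≤ e * |g x y - h x y| + (1 - e) * |h x y| := by
        refine (abs_sub _ _).trans ?_
        rw [abs_mul, abs_mul, abs_of_pos he, abs_of_nonneg (by linarith : 0 ≤ 1 - e)]
    _ ≤ x / c * |h x y| + |g x y - h x y| := by
        nlinarith [abs_nonneg (h x y), abs_nonneg (g x y - h x y)]

theorem abs_dampedDeriv_sub (hc : 0 ≤ c) :
    |dampedDeriv c g g' x y - g' x y| = |g x y| / c := by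
  simp [dampedDeriv, abs_div, abs_of_nonneg hc]

theorem abs_dampedDeriv_le (hc : 1 ≤ c) : |dampedDeriv c g g' x y| ≤ |g' x y| + |g x y| := by
  have := abs_dampedDeriv_sub (g := g) (g' := g') (x := x) (y := y) (by linarith : 0 ≤ c)
  have := div_le_self (abs_nonneg (g x y)) hc
  linarith [abs_sub_abs_le_abs_sub (dampedDeriv c g g' x y) (g' x y)]

theorem abs_cutoff_jet_le (hc : 1 ≤ c) (hx : 0 ≤ x) :
    |cutoff c n f x y| + |cutoff c n (dampedDeriv c f f₁) x y|
        + |cutoff c n (dampedDeriv₂ c f f₁ f₁₁) x y|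
      ≤ 3 * (|f x y| + |f₁ x y| + |f₁₁ x y|) := by
  have hc₀ : 0 ≤ c := by linarith
  have h₀ := abs_cutoff_le (g := f) (n := n) (y := y) hc₀ hx
  have h₁ := abs_cutoff_le (g := dampedDeriv c f f₁) (n := n) (y := y) hc₀ hx
  have h₂ := abs_cutoff_le (g := dampedDeriv₂ c f f₁ f₁₁) (n := n) (y := y) hc₀ hx
  have d₁ := abs_dampedDeriv_le (g := f) (g' := f₁) (x := x) (y := y) hc
  have d₁₁ := abs_dampedDeriv_le (g := f₁) (g' := f₁₁) (x := x) (y := y) hc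
  have d₂ := abs_dampedDeriv_le (g := dampedDeriv c f f₁) (g' := dampedDeriv c f₁ f₁₁)
    (x := x) (y := y) hc
  rw [← dampedDeriv₂] at d₂
  linarith [abs_nonneg (f₁₁ x y)]

theorem abs_cutoff_jet_sub_le (hc : 1 ≤ c) (hx : 0 ≤ x) (hy : y ≤ n) :
    |cutoff c n f x y - f x y| + |cutoff c n (dampedDeriv c f f₁) x y - f₁ x y|
        + |cutoff c n (dampedDeriv₂ c f f₁ f₁₁) x y - f₁₁ x y|
      ≤ (x + 2) / c * (|f x y| + |f₁ x y| + |f₁₁ x y|) := by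
  have hc₀ : 0 ≤ c := by linarith
  have e₀ := abs_cutoff_sub_le (g := f) hc₀ hx hy f
  have e₁ := abs_cutoff_sub_le (g := dampedDeriv c f f₁) hc₀ hx hy f₁
  have e₂ := abs_cutoff_sub_le (g := dampedDeriv₂ c f f₁ f₁₁) hc₀ hx hy f₁₁
  have d₁ := abs_dampedDeriv_sub (g := f) (g' := f₁) (x := x) (y := y) hc₀
  have d₁₁ := abs_dampedDeriv_sub (g := f₁) (g' := f₁₁) (x := x) (y := y) hc₀
  have d₂ := abs_dampedDeriv_sub (g := dampedDeriv c f f₁) (g' := dampedDeriv c f₁ f₁₁)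
    (x := x) (y := y) hc₀
  rw [← dampedDeriv₂] at d₂
  have hd : |dampedDeriv c f f₁ x y| / c ≤ |f₁ x y| / c + |f x y| / c := by
    rw [← add_div]
    exact div_le_div_of_nonneg_right (abs_dampedDeriv_le hc) hc₀
  have h₂ : |dampedDeriv₂ c f f₁ f₁₁ x y - f₁₁ x y|
      ≤ |dampedDeriv c f f₁ x y| / c + |f₁ x y| / c := by
    rw [← d₂, ← d₁₁]
    exact abs_sub_le _ _ _
  have hf₁₁ : 0 ≤ |f₁₁ x y| / c := div_nonneg (abs_nonneg _) hc₀
  have hsplit : (x + 2) / c * (|f x y| + |f₁ x y| + |f₁₁ x y|)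
      = x / c * |f x y| + x / c * |f₁ x y| + x / c * |f₁₁ x y|
        + 2 * (|f x y| / c + |f₁ x y| / c + |f₁₁ x y| / c) := by ring
  simp only [sub_self, abs_zero] at e₀
  linarith

theorem cutoff_vanishing_at_infinity (hc : 0 < c) {C : ℝ}
    (hg : ∀ x ∈ Ici (0:ℝ), ∀ y, |g x y| ≤ C) :
    ∀ ε > (0:ℝ), ∃ R > (0:ℝ), ∀ x ∈ Ici (0:ℝ), ∀ y : ℕ,
      x + (y:ℝ) > R → |cutoff c n g x y| < ε := by
  intro ε hε
  have hlim : Tendsto (fun x => exp (-x / c) * C) atTop (𝓝 0) := by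
    simpa [neg_div] using
      (tendsto_exp_neg_atTop_nhds_zero.comp (tendsto_id.atTop_div_const hc)).mul_const C
  obtain ⟨R₀, hR₀⟩ := eventually_atTop.1 (hlim.eventually (gt_mem_nhds hε))
  refine ⟨max R₀ 0 + n + 1, by positivity, fun x hx y hxy => ?_⟩
  unfold cutoff
  split_ifs with hy
  · have hyn : (y : ℝ) ≤ n := by exact_mod_cast hy
    calc |exp (-x / c) * g x y| = exp (-x / c) * |g x y| := by
          rw [abs_mul, abs_of_pos (exp_pos _)]
      _ ≤ exp (-x / c) * C := by gcongr; exact hg x hx y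
      _ < ε := hR₀ x (by linarith [le_max_left R₀ 0])
  · simpa using hε

theorem exists_abs_cutoff_jet_sub_lt {C : ℝ}
    (hC : ∀ x ∈ Ici (0:ℝ), ∀ y, |f x y| + |f₁ x y| + |f₁₁ x y| ≤ C) :
    ∀ R : ℝ, ∀ ε > (0:ℝ), ∃ N₀ : ℕ, ∀ m ≥ N₀, ∀ n ≥ N₀, ∀ x ∈ Icc (0:ℝ) R, ∀ y : ℕ,
      (y:ℝ) ≤ R →
        |cutoff (m + 1) n f x y - f x y|
            + |cutoff (m + 1) n (dampedDeriv (m + 1) f f₁) x y - f₁ x y|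
            + |cutoff (m + 1) n (dampedDeriv₂ (m + 1) f f₁ f₁₁) x y - f₁₁ x y| < ε := by
  intro R ε hε
  obtain ⟨N, hN⟩ := exists_nat_gt ((R + 2) * C / ε)
  refine ⟨max ⌈R⌉₊ N, fun m hm n hn x hx y hy => ?_⟩
  have hm₁ : (1 : ℝ) ≤ m + 1 := le_add_of_nonneg_left m.cast_nonneg
  have hyn : y ≤ n := by
    have : (⌈R⌉₊ : ℝ) ≤ n := by exact_mod_cast (le_max_left _ _).trans hn
    exact_mod_cast hy.trans ((Nat.le_ceil R).trans this)
  have hNm : (N : ℝ) ≤ m := by exact_mod_cast (le_max_right _ _).trans hm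
  have hS := hC x hx.1 y
  calc _ ≤ (x + 2) / (m + 1) * (|f x y| + |f₁ x y| + |f₁₁ x y|) :=
        abs_cutoff_jet_sub_le hm₁ hx.1 hyn
    _ ≤ (R + 2) / (m + 1) * C := by
        refine mul_le_mul (div_le_div_of_nonneg_right ?_ ?_) hS (by positivity) ?_
        · linarith [hx.2]
        · linarith
        · exact div_nonneg (by linarith) (by linarith)
    _ < ε := by
        rw [div_mul_eq_mul_div, div_lt_iff₀ (by linarith)]
        rw [div_lt_iff₀ hε] at hN
        nlinarith

end

end DampedCutoff

open DampedCutoff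

/-- Lemma 2.9 of the paper: every `f ∈ C_b²(D)`, `D = [0,∞) × ℕ`, can be approximated by
a doubly indexed family `f^{m,n} ∈ C_0²(D)` together with its first and second
`x`-derivatives, uniformly on bounded subsets of `D`. -/
theorem stmt6 (f f₁ f₁₁ : ℝ → ℕ → ℝ)
    (hderiv1 : ∀ y : ℕ, ∀ x ∈ Set.Ici (0:ℝ),
      HasDerivWithinAt (fun x' => f x' y) (f₁ x y) (Set.Ici 0) x)
    (hderiv2 : ∀ y : ℕ, ∀ x ∈ Set.Ici (0:ℝ),
      HasDerivWithinAt (fun x' => f₁ x' y) (f₁₁ x y) (Set.Ici 0) x)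
    (hcont : ∀ y : ℕ, ContinuousOn (fun x => f₁₁ x y) (Set.Ici 0))
    (hbdd : ∃ C : ℝ, ∀ x ∈ Set.Ici (0:ℝ), ∀ y : ℕ,
      |f x y| + |f₁ x y| + |f₁₁ x y| ≤ C) :
    ∃ F F₁ F₁₁ : ℕ → ℕ → ℝ → ℕ → ℝ,
      (∀ m n : ℕ, ∀ y : ℕ, ∀ x ∈ Set.Ici (0:ℝ),
        HasDerivWithinAt (fun x' => F m n x' y) (F₁ m n x y) (Set.Ici 0) x ∧
        HasDerivWithinAt (fun x' => F₁ m n x' y) (F₁₁ m n x y) (Set.Ici 0) x) ∧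
      (∀ m n : ℕ, ∀ y : ℕ, ContinuousOn (fun x => F₁₁ m n x y) (Set.Ici 0)) ∧
      (∀ m n : ℕ, ∃ C : ℝ, ∀ x ∈ Set.Ici (0:ℝ), ∀ y : ℕ,
        |F m n x y| + |F₁ m n x y| + |F₁₁ m n x y| ≤ C) ∧
      (∀ m n : ℕ, ∀ ε > (0:ℝ), ∃ R > (0:ℝ), ∀ x ∈ Set.Ici (0:ℝ), ∀ y : ℕ,
        x + (y:ℝ) > R → |F m n x y| < ε) ∧
      (∀ R > (0:ℝ), ∀ ε > (0:ℝ), ∃ N₀ : ℕ, ∀ m ≥ N₀, ∀ n ≥ N₀,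
        ∀ x ∈ Set.Icc (0:ℝ) R, ∀ y : ℕ, (y:ℝ) ≤ R →
          |F m n x y - f x y| + |F₁ m n x y - f₁ x y| + |F₁₁ m n x y - f₁₁ x y| < ε) := by
  obtain ⟨C, hC⟩ := hbdd
  have hf : ∀ y, ContinuousOn (f · y) (Ici 0) := fun y x hx =>
    (hderiv1 y x hx).continuousWithinAt
  have hf₁ : ∀ y, ContinuousOn (f₁ · y) (Ici 0) := fun y x hx =>
    (hderiv2 y x hx).continuousWithinAt
  refine ⟨fun m n => cutoff (m + 1) n f, fun m n => cutoff (m + 1) n (dampedDeriv (m + 1) f f₁),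
    fun m n => cutoff (m + 1) n (dampedDeriv₂ (m + 1) f f₁ f₁₁), fun m n y x hx => ?_,
    fun m n y => ?_, fun m n => ?_, fun m n => ?_,
    fun R _ => exists_abs_cutoff_jet_sub_lt hC R⟩
  · exact ⟨hasDerivWithinAt_cutoff (hderiv1 y x hx),
      hasDerivWithinAt_cutoff (hasDerivWithinAt_dampedDeriv (hderiv1 y x hx) (hderiv2 y x hx))⟩
  · exact continuousOn_cutoff <| continuousOn_dampedDeriv
      (continuousOn_dampedDeriv (hf y) (hf₁ y)) (continuousOn_dampedDeriv (hf₁ y) (hcont y))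
  · refine ⟨3 * C, fun x hx y => (abs_cutoff_jet_le ?_ hx).trans (by linarith [hC x hx y])⟩
    exact le_add_of_nonneg_left m.cast_nonneg
  · refine cutoff_vanishing_at_infinity (C := C) (by positivity) fun x hx y => ?_
    linarith [hC x hx y, abs_nonneg (f₁ x y), abs_nonneg (f₁₁ x y)]
end

section
/- Let b > 0, r > 0. Let m : ℕ → [0,∞) be such that y ↦ m(y)·y is non-decreasing on ℕ and R₂ := sup_{y ∈ ℕ} m(y)·y satisfies 0 < R₂ < ∞. Let (p'_ξ)_{ξ ∈ {-1}∪ℕ} be a probability mass function with S := Σ_{ξ=0}^∞ ξ p'_ξ < ∞ and R₁ := −p'_{-1} + S < 0. Define γ(x,y) = r·y + x·m(y)·y for (x,y) ∈ [0,∞) × ℕ, and let sgn(t) equal 1, 0, −1 according to t > 0, t = 0, t < 0. Then there exist θ > 0 and λ > 0 (for example θ = b / (2 R₂ (p'_{-1} + S)) and λ = min(b/2, −r R₁)) such that for all x, x̃ ∈ [0,∞) and all y, ỹ ∈ ℕ: −b·|x − x̃| − θ·p'_{-1}·(γ(x,y) − γ(x̃,ỹ))·sgn(y − ỹ) + θ·S·|γ(x,y)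 − γ(x̃,ỹ)| ≤ −λ·( |x − x̃| + θ·|y − ỹ| ). -/
/-!
Write `Γ = γ(x,y) − γ(x̃,ỹ)` and, by symmetry, assume `ỹ ≤ y`. Splitting
`Γ = (r(y − ỹ) + x(m(y)y − m(ỹ)ỹ)) + (x − x̃)m(ỹ)ỹ`, monotonicity of `y ↦ m(y)y` makes the first
part at least `r(y − ỹ) ≥ 0`, and the second is at most `R₂|x − x̃|` in absolute value. Hence the
two `γ`-terms together contribute at most `θ(R₁ r |y − ỹ| + (p'_{-1} + S) R₂ |x − x̃|)`; the choice of
`θ` lets `−b|x − x̃|` absorb the second summand with `b/2` to spare, and `R₁ < 0` makes the first one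
a contraction in `y`.
-/

open Real

/-- The paper's `γ(x, y) = y·h(x, y)` with division rate `h(x, y) = r + x·m(y)`. -/
noncomputable def totalDivisionRate (r : ℝ) (m : ℕ → ℝ) (x : ℝ) (y : ℕ) : ℝ :=
  r * y + x * m y * y

lemma sub_mul_sign_le_of_decomp {p S r R Δ d A B : ℝ} (hS : 0 ≤ S) (hSp : S ≤ p) (hr : 0 ≤ r)
    (hd : 0 ≤ d) (hA : r * d ≤ A) (hA₀ : d = 0 → A = 0) (hB : |B| ≤ R * Δ) :
    S * |A + B| - p * (A + B) * sign d ≤ -(p - S) * r * d + (p + S) * R * Δ := by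
  have hSB : S * |B| ≤ S * (R * Δ) := mul_le_mul_of_nonneg_left hB hS
  have hpB : p * |B| ≤ p * (R * Δ) := mul_le_mul_of_nonneg_left hB (hS.trans hSp)
  rcases hd.eq_or_lt with rfl | hd
  · rw [hA₀ rfl, sign_zero]
    simp only [zero_add, mul_zero, sub_zero]
    nlinarith [mul_nonneg (hS.trans hSp) (abs_nonneg B)]
  · have hAabs : |A + B| ≤ A + |B| :=
      (abs_add_le A B).trans_eq (by rw [abs_of_nonneg (by nlinarith)])
    have hpA : (p - S) * (r * d) ≤ (p - S) * A := mul_le_mul_of_nonneg_left hA (by linarith)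
    rw [sign_of_pos hd, mul_one]
    nlinarith [neg_abs_le B, mul_le_mul_of_nonneg_left hAabs hS]

section

variable {r : ℝ} {m : ℕ → ℝ} {p S R : ℝ}

lemma totalDivisionRate_sub_mul_sign_le_of_le (hr : 0 ≤ r)
    (hmono : Monotone fun y : ℕ => m y * y) (hR : ∀ y : ℕ, m y * y ≤ R)
    (hS : 0 ≤ S) (hSp : S ≤ p) {x x' : ℝ} (hx : 0 ≤ x) {y y' : ℕ} (hy : y' ≤ y) :
    S * |totalDivisionRate r m x y - totalDivisionRate r m x' y'|
        - p * (totalDivisionRate r m x y - totalDivisionRate r m x' y') * sign ((y : ℝ) - y')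
      ≤ -(p - S) * r * |(y : ℝ) - y'| + (p + S) * R * |x - x'| := by
  have hyR : (y' : ℝ) ≤ y := Nat.cast_le.mpr hy
  have hφ : m y' * y' ≤ m y * y := hmono hy
  have hφ₀ : 0 ≤ m y' * y' := by simpa using hmono (Nat.zero_le y')
  rw [abs_of_nonneg (sub_nonneg.mpr hyR)]
  have hsplit : totalDivisionRate r m x y - totalDivisionRate r m x' y'
      = (r * (y - y') + x * (m y * y - m y' * y')) + (x - x') * (m y' * y') := by
    unfold totalDivisionRate; ring
  rw [hsplit]
  refine sub_mul_sign_le_of_decomp hS hSp hr (sub_nonneg.mpr hyR)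
    (le_add_of_nonneg_right (mul_nonneg hx (sub_nonneg.mpr hφ))) (fun h => ?_) ?_
  · obtain rfl : y = y' := by exact_mod_cast (sub_eq_zero.mp h)
    simp
  · rw [abs_mul, abs_of_nonneg hφ₀, mul_comm]
    exact mul_le_mul_of_nonneg_right (hR y') (abs_nonneg _)

lemma totalDivisionRate_sub_mul_sign_le (hr : 0 ≤ r)
    (hmono : Monotone fun y : ℕ => m y * y) (hR : ∀ y : ℕ, m y * y ≤ R)
    (hS : 0 ≤ S) (hSp : S ≤ p) {x x' : ℝ} (hx : 0 ≤ x) (hx' : 0 ≤ x') (y y' : ℕ) :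
    S * |totalDivisionRate r m x y - totalDivisionRate r m x' y'|
        - p * (totalDivisionRate r m x y - totalDivisionRate r m x' y') * sign ((y : ℝ) - y')
      ≤ -(p - S) * r * |(y : ℝ) - y'| + (p + S) * R * |x - x'| := by
  rcases le_total y' y with hy | hy
  · exact totalDivisionRate_sub_mul_sign_le_of_le hr hmono hR hS hSp hx hy
  · have h := totalDivisionRate_sub_mul_sign_le_of_le hr hmono hR hS hSp hx' hy (x' := x)
    rw [abs_sub_comm, abs_sub_comm (y : ℝ), abs_sub_comm x, ← neg_sub (y' : ℝ), sign_neg]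
    convert h using 2
    ring

end

lemma contraction_of_rate_bound {b θ lam p S r R Δ d Γ σ : ℝ}
    (h : S * |Γ| - p * Γ * σ ≤ -(p - S) * r * d + (p + S) * R * Δ)
    (hθ : 0 ≤ θ) (hθR : θ * (p + S) * R = b / 2) (hlam_b : lam ≤ b / 2)
    (hlam_r : lam ≤ r * (p - S)) (hΔ : 0 ≤ Δ) (hd : 0 ≤ d) :
    -b * Δ - θ * p * Γ * σ + θ * S * |Γ| ≤ -lam * (Δ + θ * d) := by
  nlinarith [mul_le_mul_of_nonneg_left h hθ, mul_le_mul_of_nonneg_right hlam_b hΔ,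
    mul_le_mul_of_nonneg_right hlam_r (mul_nonneg hθ hd)]

theorem stmt9_general (b r : ℝ) (hb : 0 < b) (hr : 0 < r)
    (m : ℕ → ℝ)
    (hmono : ∀ y₁ y₂ : ℕ, y₁ ≤ y₂ → m y₁ * (y₁:ℝ) ≤ m y₂ * (y₂:ℝ))
    (R₂ : ℝ) (hR₂pos : 0 < R₂)
    (hR₂ : IsLUB (Set.range fun y : ℕ => m y * (y:ℝ)) R₂)
    (p' : ℤ → ℝ) (hp'0 : ∀ ξ, 0 ≤ p' ξ)
    (S : ℝ) (hS : HasSum (fun ξ : ℕ => (ξ:ℝ) * p' (ξ:ℤ)) S)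
    (R₁ : ℝ) (hR₁def : R₁ = -p' (-1) + S) (hR₁ : R₁ < 0) :
    ∃ θ > (0:ℝ), ∃ lam > (0:ℝ), ∀ x ≥ (0:ℝ), ∀ x' ≥ (0:ℝ), ∀ y y' : ℕ,
      -b * |x - x'|
        - θ * p' (-1) * ((r * (y:ℝ) + x * m y * (y:ℝ)) - (r * (y':ℝ) + x' * m y' * (y':ℝ)))
            * Real.sign ((y:ℝ) - (y':ℝ))
        + θ * S * |(r * (y:ℝ) + x * m y * (y:ℝ)) - (r * (y':ℝ) + x' * m y' * (y':ℝ))|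
      ≤ -lam * (|x - x'| + θ * |(y:ℝ) - (y':ℝ)|) := by
  have hS₀ : 0 ≤ S := hS.nonneg fun ξ => mul_nonneg (Nat.cast_nonneg ξ) (hp'0 ξ)
  have hSp : S < p' (-1) := by linarith
  have hpS : 0 < p' (-1) + S := by linarith
  refine ⟨b / (2 * R₂ * (p' (-1) + S)), by positivity, min (b / 2) (r * (p' (-1) - S)),
    lt_min (by positivity) (mul_pos hr (by linarith)), fun x hx x' hx' y y' => ?_⟩
  exact contraction_of_rate_bound
    (totalDivisionRate_sub_mul_sign_le hr.le (fun _ _ h => hmono _ _ h)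
      (fun y => hR₂.1 ⟨y, rfl⟩) hS₀ hSp.le hx hx' y y')
    (by positivity) (by field_simp) (min_le_left _ _) (min_le_right _ _)
    (abs_nonneg _) (abs_nonneg _)

/-- Exponential-contraction inequality from Theorem 4.9 of the paper: with
`γ(x,y) = r·y + x·m(y)·y`, under Conditions 4.5–4.6 there exist `θ > 0` and `λ > 0`
such that the coupling-generator bound is at most `−λ(|x − x̃| + θ|y − ỹ|)`. -/
theorem stmt9 (b r : ℝ) (hb : 0 < b) (hr : 0 < r)
    (m : ℕ → ℝ) (hm0 : ∀ y, 0 ≤ m y)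
    (hmono : ∀ y₁ y₂ : ℕ, y₁ ≤ y₂ → m y₁ * (y₁:ℝ) ≤ m y₂ * (y₂:ℝ))
    (R₂ : ℝ) (hR₂pos : 0 < R₂)
    (hR₂ : IsLUB (Set.range fun y : ℕ => m y * (y:ℝ)) R₂)
    (p' : ℤ → ℝ) (hp'0 : ∀ ξ, 0 ≤ p' ξ) (hp'neg : ∀ ξ : ℤ, ξ < -1 → p' ξ = 0)
    (hp'sum : HasSum p' 1)
    (S : ℝ) (hS : HasSum (fun ξ : ℕ => (ξ:ℝ) * p' (ξ:ℤ)) S)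
    (R₁ : ℝ) (hR₁def : R₁ = -p' (-1) + S) (hR₁ : R₁ < 0) :
    ∃ θ > (0:ℝ), ∃ lam > (0:ℝ), ∀ x ≥ (0:ℝ), ∀ x' ≥ (0:ℝ), ∀ y y' : ℕ,
      -b * |x - x'|
        - θ * p' (-1) * ((r * (y:ℝ) + x * m y * (y:ℝ)) - (r * (y':ℝ) + x' * m y' * (y':ℝ)))
            * Real.sign ((y:ℝ) - (y':ℝ))
        + θ * S * |(r * (y:ℝ) + x * m y * (y:ℝ)) - (r * (y':ℝ) + x' * m y' * (y':ℝ))|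
      ≤ -lam * (|x - x'| + θ * |(y:ℝ) - (y':ℝ)|) :=
  stmt9_general b r hb hr m hmono R₂ hR₂pos hR₂ p' hp'0 S hS R₁ hR₁def hR₁
end

section
/- Let b > 0, r > 0, let m : ℕ → [0,∞) be such that y ↦ m(y)·y is non-decreasing on ℕ with R₂ := sup_{y ∈ ℕ} m(y)·y < ∞, and let (p'_ξ)_{ξ ∈ {-1}∪ℕ} be a probability mass function with S := Σ_{ξ=0}^∞ ξ p'_ξ < ∞; set R₁ := −p'_{-1} + S and R̄ := p'_{-1} + S. Define γ(x,y) = r·y + x·m(y)·y, and let sgn(t) equal 1, 0, −1 according to t > 0, t = 0, t < 0. Then for every θ > 0, all x ≥ x̃ ≥ 0 and all y, ỹ ∈ ℕ: −b·(x − x̃) − θ·p'_{-1}·(γ(x,y) − γ(x̃,ỹ))·sgn(y − ỹ) + θ·S·|γ(x,y) − γ(x̃,ỹ)| ≤ −(b − θ·R̄·R₂)·(x − x̃) + θ·r·R₁·|y − ỹ| + θ·R₁·x̃·|m(y)·y − m(ỹ)·ỹ|. -/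
/-!
Write `γ(x,y) - γ(x̃,ỹ) = A + E` with `A = r(y - ỹ) + x̃(m(y)y - m(ỹ)ỹ)` and
`E = (x - x̃)·m(y)y`. Because `y ↦ m(y)y` is non-decreasing, both summands of `A`
have the sign of `y - ỹ`, so `A·sgn(y - ỹ) = |A| = r|y - ỹ| + x̃|m(y)y - m(ỹ)ỹ|`,
while `0 ≤ E ≤ (x - x̃)R₂`. Hence the `p'_{-1}` term contributes at most
`-p'_{-1}|A| + p'_{-1}(x - x̃)R₂` and the `S` term at most `S|A| + S(x - x̃)R₂`,
which add up to the right-hand side.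
-/

lemma sub_mul_sign_sub_of_monotone {α : Type*} [LinearOrder α] {f g : α → ℝ}
    (hf : Monotone f) (hg : StrictMono g) (a b : α) :
    (f a - f b) * Real.sign (g a - g b) = |f a - f b| := by
  rcases lt_trichotomy a b with hab | rfl | hab
  · rw [Real.sign_of_neg (sub_neg.2 (hg hab)), abs_of_nonpos (sub_nonpos.2 (hf hab.le))]
    ring
  · simp
  · rw [Real.sign_of_pos (sub_pos.2 (hg hab)), abs_of_nonneg (sub_nonneg.2 (hf hab.le))]
    ring

lemma abs_sign_le_one (t : ℝ) : |Real.sign t| ≤ 1 := by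
  rcases Real.sign_apply_eq t with h | h | h <;> simp [h]

lemma neg_mul_add_mul_sign_add_mul_abs_add_le {A E a e s p q : ℝ} (hp : 0 ≤ p) (hq : 0 ≤ q)
    (hs : |s| ≤ 1) (hAs : a ≤ A * s) (hA : |A| ≤ a) (hE : |E| ≤ e) :
    -p * ((A + E) * s) + q * |A + E| ≤ (p + q) * e + (q - p) * a := by
  have hEs : -e ≤ E * s := by
    have : |E * s| ≤ e := by
      rw [abs_mul]
      exact (mul_le_of_le_one_right (abs_nonneg E) hs).trans hE
    linarith [neg_abs_le (E * s)]
  have hAE : |A + E| ≤ a + e := (abs_add_le A E).trans (add_le_add hA hE)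
  linarith [mul_le_mul_of_nonneg_left hAs hp, mul_le_mul_of_nonneg_left hEs hp,
    mul_le_mul_of_nonneg_left hAE hq]

theorem stmt10_general (b r : ℝ) (hr : 0 < r)
    (m : ℕ → ℝ)
    (hmono : ∀ y₁ y₂ : ℕ, y₁ ≤ y₂ → m y₁ * (y₁:ℝ) ≤ m y₂ * (y₂:ℝ))
    (R₂ : ℝ) (hR₂ : IsLUB (Set.range fun y : ℕ => m y * (y:ℝ)) R₂)
    (p' : ℤ → ℝ) (hp'0 : ∀ ξ, 0 ≤ p' ξ)
    (S : ℝ) (hS : HasSum (fun ξ : ℕ => (ξ:ℝ) * p' (ξ:ℤ)) S)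
    (R₁ Rbar : ℝ) (hR₁def : R₁ = -p' (-1) + S) (hRbardef : Rbar = p' (-1) + S) :
    ∀ θ > (0:ℝ), ∀ x' ≥ (0:ℝ), ∀ x, x' ≤ x → ∀ y y' : ℕ,
      -b * (x - x')
        - θ * p' (-1) * ((r * (y:ℝ) + x * m y * (y:ℝ)) - (r * (y':ℝ) + x' * m y' * (y':ℝ)))
            * Real.sign ((y:ℝ) - (y':ℝ))
        + θ * S * |(r * (y:ℝ) + x * m y * (y:ℝ)) - (r * (y':ℝ) + x' * m y' * (y':ℝ))|
      ≤ -(b - θ * Rbar * R₂) * (x - x') + θ * r * R₁ * |(y:ℝ) - (y':ℝ)|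
          + θ * R₁ * x' * |m y * (y:ℝ) - m y' * (y':ℝ)| := by
  subst hR₁def hRbardef
  intro θ hθ x' hx' x hx y y'
  have hS0 : 0 ≤ S := hS.nonneg fun ξ : ℕ => mul_nonneg ξ.cast_nonneg (hp'0 _)
  have hmono' : Monotone fun y : ℕ => m y * (y : ℝ) := fun _ _ h => hmono _ _ h
  have hY := sub_mul_sign_sub_of_monotone Nat.mono_cast Nat.strictMono_cast y y'
  have hD := sub_mul_sign_sub_of_monotone hmono' Nat.strictMono_cast y y'
  set A : ℝ := r * (y - y') + x' * (m y * y - m y' * y')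
  set a : ℝ := r * |(y:ℝ) - y'| + x' * |m y * y - m y' * y'|
  have hAs : a ≤ A * Real.sign ((y:ℝ) - y') := by rw [add_mul, mul_assoc, mul_assoc, hY, hD]
  have hA : |A| ≤ a := by
    refine (abs_add_le _ _).trans_eq ?_
    rw [abs_mul, abs_mul, abs_of_pos hr, abs_of_nonneg hx']
  have hE : |(x - x') * (m y * y)| ≤ (x - x') * R₂ := by
    rw [abs_of_nonneg (mul_nonneg (sub_nonneg.2 hx) (by simpa using hmono 0 y))]
    exact mul_le_mul_of_nonneg_left (hR₂.1 ⟨y, rfl⟩) (sub_nonneg.2 hx)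
  have key :=
    neg_mul_add_mul_sign_add_mul_abs_add_le (hp'0 (-1)) hS0 (abs_sign_le_one _) hAs hA hE
  have hsplit : (r * (y:ℝ) + x * m y * y) - (r * y' + x' * m y' * y')
      = A + (x - x') * (m y * y) := by ring
  rw [hsplit]
  linarith [mul_le_mul_of_nonneg_left key hθ.le]

/-- Intermediate estimate from the proof of Theorem 4.9 of the paper (case `x ≥ x̃`):
with `γ(x,y) = r·y + x·m(y)·y`, `R̄ = p'_{-1} + S` and `R₁ = −p'_{-1} + S`, for every
`θ > 0` the coupling-generator expression is bounded by
`−(b − θ·R̄·R₂)(x − x̃) + θrR₁|y − ỹ| + θR₁·x̃·|m(y)y − m(ỹ)ỹ|`. -/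
theorem stmt10 (b r : ℝ) (hb : 0 < b) (hr : 0 < r)
    (m : ℕ → ℝ) (hm0 : ∀ y, 0 ≤ m y)
    (hmono : ∀ y₁ y₂ : ℕ, y₁ ≤ y₂ → m y₁ * (y₁:ℝ) ≤ m y₂ * (y₂:ℝ))
    (R₂ : ℝ) (hR₂ : IsLUB (Set.range fun y : ℕ => m y * (y:ℝ)) R₂)
    (p' : ℤ → ℝ) (hp'0 : ∀ ξ, 0 ≤ p' ξ) (hp'neg : ∀ ξ : ℤ, ξ < -1 → p' ξ = 0)
    (hp'sum : HasSum p' 1)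
    (S : ℝ) (hS : HasSum (fun ξ : ℕ => (ξ:ℝ) * p' (ξ:ℤ)) S)
    (R₁ Rbar : ℝ) (hR₁def : R₁ = -p' (-1) + S) (hRbardef : Rbar = p' (-1) + S) :
    ∀ θ > (0:ℝ), ∀ x' ≥ (0:ℝ), ∀ x, x' ≤ x → ∀ y y' : ℕ,
      -b * (x - x')
        - θ * p' (-1) * ((r * (y:ℝ) + x * m y * (y:ℝ)) - (r * (y':ℝ) + x' * m y' * (y':ℝ)))
            * Real.sign ((y:ℝ) - (y':ℝ))
        + θ * S * |(r * (y:ℝ) + x * m y * (y:ℝ)) - (r * (y':ℝ) + x' * m y' * (y':ℝ))|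
      ≤ -(b - θ * Rbar * R₂) * (x - x') + θ * r * R₁ * |(y:ℝ) - (y':ℝ)|
          + θ * R₁ * x' * |m y * (y:ℝ) - m y' * (y':ℝ)| :=
  stmt10_general b r hr m hmono R₂ hR₂ p' hp'0 S hS R₁ Rbar hR₁def hRbardef
end
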